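/- arXiv:1009.1800 — 10 statements merged into one kernel-verified Lean document; each statement's English description precedes it below -/
import Mathlib

section
/- Let n ≥ 1 and let b_1, …, b_n be nonzero even integers. Then the continued fraction [b_1, …, b_n] is a well-defined rational number (no zero denominator occurs in its evaluation) and its absolute value is strictly less than 1. -/
/-!
By induction from the tail: if `|[b₂, …, bₙ]| < 1` and `b₁` is a nonzero even integer, then
`|b₁| ≥ 2`, so the partial denominator `b₁ + [b₂, …, bₙ]` has absolute value `> 1`; in particular
it is nonzero, and its reciprocal `[b₁, …, bₙ]` again has absolute value `< 1`.
-/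

/-- The continued fraction `[b₁, b₂, …, bₙ] = 1/(b₁ + 1/(b₂ + ⋯ + 1/bₙ))`,
evaluated in `ℚ` (with the convention `cf [] = 0`). -/
def cf : List ℤ → ℚ
  | [] => 0
  | b :: t => 1 / ((b : ℚ) + cf t)

lemma Int.two_le_abs_of_even {b : ℤ} (hb0 : b ≠ 0) (hbe : Even b) : 2 ≤ |b| := by
  obtain ⟨k, rfl⟩ := hbe
  rcases abs_cases (k + k) with ⟨h, _⟩ | ⟨h, _⟩ <;> omega

lemma one_lt_abs_add_of_two_le_abs {K : Type*} [CommRing K] [LinearOrder K] [IsStrictOrderedRing K]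
    {x y : K} (hx : 2 ≤ |x|) (hy : |y| < 1) : 1 < |x + y| := by
  have := abs_sub_abs_le_abs_sub x (-y)
  rw [sub_neg_eq_add, abs_neg] at this
  linarith

lemma one_lt_abs_cons_denom {b : ℤ} {t : List ℤ} (hb0 : b ≠ 0) (hbe : Even b)
    (ht : |cf t| < 1) : 1 < |(b : ℚ) + cf t| :=
  one_lt_abs_add_of_two_le_abs (by exact_mod_cast Int.two_le_abs_of_even hb0 hbe) ht

lemma abs_cf_lt_one {l : List ℤ} (hl : ∀ x ∈ l, x ≠ 0 ∧ Even x) : |cf l| < 1 := by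
  induction l with
  | nil => simp [cf]
  | cons b t ih =>
    obtain ⟨hb0, hbe⟩ := hl b List.mem_cons_self
    have hden := one_lt_abs_cons_denom hb0 hbe (ih fun x hx => hl x (List.mem_cons_of_mem b hx))
    rw [cf, abs_div, abs_one, div_lt_one (by linarith)]
    exact hden

theorem stmt0_general (l : List ℤ)
    (hb : ∀ x ∈ l, x ≠ 0 ∧ Even x) :
    (∀ (b : ℤ) (t : List ℤ), b :: t <:+ l → ((b : ℚ) + cf t) ≠ 0) ∧ |cf l| < 1 := by
  refine ⟨fun b t hsuf => ?_, abs_cf_lt_one hb⟩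
  have hbt : ∀ x ∈ b :: t, x ≠ 0 ∧ Even x := fun x hx => hb x (hsuf.subset hx)
  obtain ⟨hb0, hbe⟩ := hbt b List.mem_cons_self
  have hden := one_lt_abs_cons_denom hb0 hbe
    (abs_cf_lt_one fun x hx => hbt x (List.mem_cons_of_mem b hx))
  exact abs_pos.mp (one_pos.trans hden)

/-- If `b₁, …, bₙ` (`n ≥ 1`) are nonzero even integers, then no zero denominator
occurs in the evaluation of the continued fraction `[b₁, …, bₙ]` (i.e. every
partial denominator `bᵢ + [bᵢ₊₁, …, bₙ]` is nonzero), and `|[b₁, …, bₙ]| < 1`. -/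
theorem stmt0 (l : List ℤ) (hne : l ≠ [])
    (hb : ∀ x ∈ l, x ≠ 0 ∧ Even x) :
    (∀ (b : ℤ) (t : List ℤ), b :: t <:+ l → ((b : ℚ) + cf t) ≠ 0) ∧ |cf l| < 1 :=
  stmt0_general l hb
end

section
/- Let n ≥ 1 and let b_1, …, b_n be nonzero even integers. Write [b_1, …, b_n] = p/q in lowest terms with q > 0. Then the product p·q is even (equivalently, exactly one of p and q is even). -/
namespace Rat

theorem num_inv_mul_den_inv (x : ℚ) : (x⁻¹.num * x⁻¹.den : ℤ) = x.num * x.den := by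
  rw [num_inv, den_inv]
  split_ifs with h
  · simp [h]
  · rw [Int.natCast_natAbs, mul_comm (x.num.sign : ℤ), mul_assoc, Int.sign_mul_abs, mul_comm]

theorem intCast_add_num (b : ℤ) (x : ℚ) : (b + x).num = b * x.den + x.num := by
  have h := mul_den_eq_num (b + x)
  rw [intCast_add_den, add_mul, mul_den_eq_num] at h
  exact_mod_cast h.symm

theorem even_num_mul_den_intCast_add {b : ℤ} (hb : Even b) {x : ℚ}
    (hx : Even (x.num * x.den)) : Even ((b + x).num * (b + x).den) := by
  rw [intCast_add_num, intCast_add_den, add_mul, mul_assoc]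
  exact (hb.mul_right _).add hx

end Rat

theorem even_num_mul_den_cf {l : List ℤ} (hl : ∀ b ∈ l, Even b) :
    Even ((cf l).num * (cf l).den) := by
  induction l with
  | nil => simp [cf]
  | cons b t ih =>
    rw [cf, one_div, Rat.num_inv_mul_den_inv]
    exact Rat.even_num_mul_den_intCast_add (hl b List.mem_cons_self)
      (ih fun c hc => hl c (List.mem_cons_of_mem b hc))

theorem stmt1_general (l : List ℤ)
    (hb : ∀ x ∈ l, x ≠ 0 ∧ Even x) :
    Even ((cf l).num * ((cf l).den : ℤ)) :=
  even_num_mul_den_cf fun x hx => (hb x hx).2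

/-- If `b₁, …, bₙ` (`n ≥ 1`) are nonzero even integers and `[b₁, …, bₙ] = p/q`
in lowest terms with `q > 0`, then the product `p·q` is even. (In Lean, `p` and
`q` are the numerator and denominator of the rational number `cf l`.) -/
theorem stmt1 (l : List ℤ) (hne : l ≠ [])
    (hb : ∀ x ∈ l, x ≠ 0 ∧ Even x) :
    Even ((cf l).num * ((cf l).den : ℤ)) :=
  stmt1_general l hb
end

section
/- Let p and q be coprime integers with 0 < |p| < q and with the product p·q even. Then there exist n ≥ 1 and nonzero even integers b_1, …, b_n such that p/q = [b_1, …, b_n]. -/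
lemma Int.exists_abs_sub_two_mul_mul_le (q d : ℤ) (hd : d ≠ 0) :
    ∃ k : ℤ, |q - 2 * k * d| ≤ |d| := by
  set x : ℚ := q / (2 * d)
  refine ⟨round x, ?_⟩
  have hd' : (d : ℚ) ≠ 0 := by exact_mod_cast hd
  have hx : 2 * d * x = q := by
    simp only [x]
    field_simp
  have hsub : ((q - 2 * round x * d : ℤ) : ℚ) = (x - round x) * (2 * d) := by
    push_cast
    linear_combination -hx
  have hle : |((q - 2 * round x * d : ℤ) : ℚ)| ≤ |(d : ℚ)| := by
    rw [hsub, abs_mul, abs_mul, abs_two]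
    nlinarith [abs_sub_round x, abs_nonneg (d : ℚ)]
  exact_mod_cast hle

lemma not_even_mul_of_eq_odd_mul {p q c : ℤ} (hcop : IsCoprime p q) (hc : Odd c)
    (hq : q = c * p) : ¬ Even (p * q) := by
  intro heven
  have hp : Even p := by
    rw [hq, ← mul_assoc, mul_comm p c, mul_assoc, Int.even_mul, Int.even_mul, or_self] at heven
    exact heven.resolve_left (Int.not_even_iff_odd.mpr hc)
  have hunit : IsUnit (2 : ℤ) :=
    hcop.isUnit_of_dvd' (even_iff_two_dvd.mp hp)
      (hq ▸ Dvd.dvd.mul_left (even_iff_two_dvd.mp hp) c)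
  exact absurd (Int.isUnit_iff.mp hunit) (by decide)

lemma exists_even_abs_sub_mul_lt {p q : ℤ} (hcop : IsCoprime p q) (hp : p ≠ 0)
    (heven : Even (p * q)) : ∃ b : ℤ, Even b ∧ |q - b * p| < |p| := by
  obtain ⟨k, hk⟩ := Int.exists_abs_sub_two_mul_mul_le q p hp
  refine ⟨2 * k, even_two_mul k, hk.lt_of_ne fun h => ?_⟩
  rcases abs_eq_abs.mp h with h | h
  · exact not_even_mul_of_eq_odd_mul hcop (odd_two_mul_add_one k) (by linear_combination h) heven
  · exact not_even_mul_of_eq_odd_mul hcop (odd_two_mul_add_one (k - 1))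
      (by linear_combination h) heven

theorem exists_even_cf_eq_div (p q : ℤ) (hcop : IsCoprime p q) (hp : p ≠ 0) (hpq : |p| < |q|)
    (heven : Even (p * q)) :
    ∃ l : List ℤ, l ≠ [] ∧ (∀ x ∈ l, x ≠ 0 ∧ Even x) ∧ (p : ℚ) / (q : ℚ) = cf l := by
  obtain ⟨b, hb, hr⟩ := exists_even_abs_sub_mul_lt hcop hp heven
  set r := q - b * p
  have hq : q = b * p + r := by ring
  have hb0 : b ≠ 0 := by
    rintro rfl
    simp only [zero_mul, sub_zero, r] at hr
    exact hr.not_gt hpq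
  have hp' : (p : ℚ) ≠ 0 := by exact_mod_cast hp
  by_cases hr0 : r = 0
  · refine ⟨[b], List.cons_ne_nil _ _, by simpa using ⟨hb0, hb⟩, ?_⟩
    rw [hq, hr0, cf, cf]
    push_cast
    rw [add_zero, add_zero]
    field_simp
  · have hcop' : IsCoprime r p := by
      simpa [r, sub_eq_add_neg, mul_comm] using hcop.symm.add_mul_left_left (-b)
    have heven' : Even (r * p) := by
      rw [Int.even_mul] at heven ⊢
      rcases heven with hp_even | hq_even
      · exact Or.inr hp_even
      · exact Or.inl (hq_even.sub (hb.mul_right p))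
    obtain ⟨l, hl, hl_even, hl_eq⟩ := exists_even_cf_eq_div r p hcop' hr0 hr heven'
    refine ⟨b :: l, List.cons_ne_nil _ _, ?_, ?_⟩
    · simpa [List.forall_mem_cons] using ⟨⟨hb0, hb⟩, hl_even⟩
    · rw [cf, ← hl_eq, hq]
      push_cast
      field_simp
termination_by p.natAbs
decreasing_by
  rw [Int.abs_eq_natAbs, Int.abs_eq_natAbs] at hr
  exact_mod_cast hr

/-- If `p` and `q` are coprime integers with `0 < |p| < q` and `p·q` even, then
`p/q` has a continued fraction expansion `[b₁, …, bₙ]` (`n ≥ 1`) with all the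
`bᵢ` nonzero even integers. -/
theorem stmt2 (p q : ℤ) (hcop : IsCoprime p q) (hp : 0 < |p|) (hpq : |p| < q)
    (heven : Even (p * q)) :
    ∃ l : List ℤ, l ≠ [] ∧ (∀ x ∈ l, x ≠ 0 ∧ Even x) ∧ (p : ℚ) / (q : ℚ) = cf l :=
  exists_even_cf_eq_div p q hcop (abs_pos.mp hp) (hpq.trans_le (le_abs_self q)) heven
end

section
/- Let b_1, …, b_n and c_1, …, c_m be two finite sequences of nonzero even integers such that [b_1, …, b_n] = [c_1, …, c_m] as rational numbers. Then n = m and b_i = c_i for every i. (That is, the continued fraction expansion with all denominators nonzero and even is unique.) -/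
lemma two_le_abs_of_even {b : ℤ} (hb : b ≠ 0) (heven : Even b) : 2 ≤ |b| := by
  obtain ⟨k, rfl⟩ := heven
  rcases abs_cases (k + k) with ⟨h, _⟩ | ⟨h, _⟩ <;> omega

lemma eq_of_even_of_abs_sub_lt_two {b c : ℤ} (hb : Even b) (hc : Even c) (h : |b - c| < 2) :
    b = c := by
  obtain ⟨k, hk⟩ := hb.sub hc
  rcases abs_cases (b - c) with ⟨_, _⟩ | ⟨_, _⟩ <;> omega

lemma one_lt_abs_add_of_even {b : ℤ} {r : ℚ} (hb : b ≠ 0) (heven : Even b) (hr : |r| < 1) :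
    1 < |(b : ℚ) + r| := by
  have h2 : (2 : ℚ) ≤ |(b : ℚ)| := by exact_mod_cast two_le_abs_of_even hb heven
  have := abs_sub_abs_le_abs_sub (b : ℚ) (-r)
  rw [sub_neg_eq_add, abs_neg] at this
  linarith

lemma abs_cf_lt_one_s3 : ∀ {l : List ℤ}, (∀ x ∈ l, x ≠ 0 ∧ Even x) → |cf l| < 1
  | [], _ => by simp [cf]
  | b :: t, hl => by
    obtain ⟨⟨hb, heven⟩, ht⟩ := List.forall_mem_cons.1 hl
    have hden := one_lt_abs_add_of_even hb heven (abs_cf_lt_one_s3 ht)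
    rw [cf, abs_div, abs_one, div_lt_one (by linarith)]
    exact hden

lemma add_cf_ne_zero {b : ℤ} {t : List ℤ} (hl : ∀ x ∈ b :: t, x ≠ 0 ∧ Even x) :
    (b : ℚ) + cf t ≠ 0 := by
  obtain ⟨⟨hb, heven⟩, ht⟩ := List.forall_mem_cons.1 hl
  have hden := one_lt_abs_add_of_even hb heven (abs_cf_lt_one_s3 ht)
  intro h
  rw [h, abs_zero] at hden
  linarith

lemma cf_cons_ne_zero {b : ℤ} {t : List ℤ} (hl : ∀ x ∈ b :: t, x ≠ 0 ∧ Even x) :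
    cf (b :: t) ≠ 0 :=
  one_div_ne_zero (add_cf_ne_zero hl)

lemma head_eq_of_cf_cons_eq {b c : ℤ} {t s : List ℤ} (hl₁ : ∀ x ∈ b :: t, x ≠ 0 ∧ Even x)
    (hl₂ : ∀ x ∈ c :: s, x ≠ 0 ∧ Even x) (heq : cf (b :: t) = cf (c :: s)) :
    b = c ∧ cf t = cf s := by
  have hden : (b : ℚ) + cf t = c + cf s := by
    simpa only [cf, one_div, inv_inj] using heq
  obtain ⟨⟨-, hb⟩, hlt⟩ := List.forall_mem_cons.1 hl₁
  obtain ⟨⟨-, hc⟩, hls⟩ := List.forall_mem_cons.1 hl₂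
  have ht := abs_cf_lt_one_s3 hlt
  have hs := abs_cf_lt_one_s3 hls
  have hbc : b = c := by
    refine eq_of_even_of_abs_sub_lt_two hb hc ?_
    have hdiff : ((b - c : ℤ) : ℚ) = cf s - cf t := by push_cast; linarith
    have : |((b - c : ℤ) : ℚ)| < 2 := by
      rw [hdiff]
      linarith [abs_sub (cf s) (cf t)]
    exact_mod_cast this
  subst hbc
  exact ⟨rfl, add_left_cancel hden⟩

theorem stmt3_general (l₁ l₂ : List ℤ)
    (hb₁ : ∀ x ∈ l₁, x ≠ 0 ∧ Even x) (hb₂ : ∀ x ∈ l₂, x ≠ 0 ∧ Even x)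
    (heq : cf l₁ = cf l₂) : l₁ = l₂ := by
  induction l₁ generalizing l₂ with
  | nil =>
    cases l₂ with
    | nil => rfl
    | cons c s => exact absurd heq.symm (cf_cons_ne_zero hb₂)
  | cons b t ih =>
    cases l₂ with
    | nil => exact absurd heq (cf_cons_ne_zero hb₁)
    | cons c s =>
      obtain ⟨rfl, htail⟩ := head_eq_of_cf_cons_eq hb₁ hb₂ heq
      exact congrArg (b :: ·)
        (ih s (List.forall_mem_cons.1 hb₁).2 (List.forall_mem_cons.1 hb₂).2 htail)

/-- Uniqueness of the all-even continued fraction expansion: if two finite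
sequences of nonzero even integers give the same continued fraction value, then
they have the same length and the same entries (i.e. they are equal as lists). -/
theorem stmt3 (l₁ l₂ : List ℤ) (h₁ : l₁ ≠ []) (h₂ : l₂ ≠ [])
    (hb₁ : ∀ x ∈ l₁, x ≠ 0 ∧ Even x) (hb₂ : ∀ x ∈ l₂, x ≠ 0 ∧ Even x)
    (heq : cf l₁ = cf l₂) : l₁ = l₂ :=
  stmt3_general l₁ l₂ hb₁ hb₂ heq
end

section
/- Let p and q be coprime integers with 0 < |p| < q and with the product p·q even. Then there exist a nonzero even integer b and coprime integers p', q' with q' > 0, |p'| < q', q' < q, and p'·q' even, such that p/q = 1/(b + p'/q'). -/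
/-!
Since `p/q = 1/(q/p)`, it suffices to find an even `b` with `|q/p - b| < 1` and to put
`p' = q - b p`, `q' = p` (after reducing to `p > 0` by a change of sign). Rounding `q` to the
nearest even multiple of `p` achieves this unless `q/p` is an odd integer; by coprimality that
would force `p = 1` and `q` odd, contradicting the evenness of `p q`.
-/

def IsEvenCFStep (p q b p' q' : ℤ) : Prop :=
  b ≠ 0 ∧ Even b ∧ IsCoprime p' q' ∧ 0 < q' ∧ |p'| < q' ∧ q' < q ∧ Even (p' * q') ∧
    (p : ℚ) / (q : ℚ) = 1 / ((b : ℚ) + (p' : ℚ) / (q' : ℚ))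

theorem IsEvenCFStep.neg {p q b p' q' : ℤ} (h : IsEvenCFStep p q b p' q') :
    IsEvenCFStep (-p) q (-b) (-p') q' := by
  obtain ⟨hb0, hb, hcop, hq', hlt, hqq, heven, heq⟩ := h
  refine ⟨neg_ne_zero.mpr hb0, hb.neg, hcop.neg_left, hq', by rwa [abs_neg], hqq,
    by rwa [neg_mul, even_neg], ?_⟩
  push_cast
  rw [neg_div, heq, neg_div, ← neg_add, one_div_neg_eq_neg_one_div]

/-- `b * a` is the even multiple of `a` nearest to `x`; the hypothesis excludes a tie. -/
theorem exists_even_abs_sub_mul_lt_s6 {x a : ℤ} (ha : 0 < a) (h : ¬ 2 * a ∣ x + a) :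
    ∃ b, Even b ∧ |x - b * a| < a := by
  have h2a : 0 < 2 * a := by positivity
  have hdiv := Int.mul_ediv_add_emod (x + a) (2 * a)
  have hr0 : (x + a) % (2 * a) ≠ 0 := fun h0 => h (Int.dvd_of_emod_eq_zero h0)
  have hr1 := Int.emod_nonneg (x + a) h2a.ne'
  have hr2 := Int.emod_lt_of_pos (x + a) h2a
  refine ⟨2 * ((x + a) / (2 * a)), even_two_mul _, abs_sub_lt_iff.mpr ⟨?_, ?_⟩⟩ <;>
    nlinarith [lt_of_le_of_ne hr1 (Ne.symm hr0)]

theorem not_two_mul_dvd_add_self {p q : ℤ} (hp : 0 < p) (hcop : IsCoprime p q)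
    (heven : Even (p * q)) : ¬ 2 * p ∣ q + p := by
  rintro ⟨k, hk⟩
  have hq : q = p * (2 * k - 1) := by linarith
  have hp1 : p = 1 := by
    rcases Int.isUnit_iff.mp (hcop.isUnit_of_dvd' dvd_rfl ⟨_, hq⟩) with h | h <;> omega
  subst hp1
  rw [one_mul, hq, one_mul] at heven
  exact Int.not_even_iff_odd.mpr ⟨k - 1, by ring⟩ heven

theorem exists_isEvenCFStep_of_pos {p q : ℤ} (hp : 0 < p) (hpq : p < q) (hcop : IsCoprime p q)
    (heven : Even (p * q)) : ∃ b p' q', IsEvenCFStep p q b p' q' := by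
  obtain ⟨b, hb, hlt⟩ := exists_even_abs_sub_mul_lt_s6 hp (not_two_mul_dvd_add_self hp hcop heven)
  have hb0 : b ≠ 0 := by
    rintro rfl
    rw [zero_mul, sub_zero, abs_lt] at hlt
    linarith
  refine ⟨b, q - b * p, p, hb0, hb, ?_, hp, hlt, hpq, ?_, ?_⟩
  · simpa [sub_eq_add_neg, mul_comm b] using hcop.symm.add_mul_left_left (-b)
  · have : (q - b * p) * p = p * q - b * (p * p) := by ring
    rw [this]
    exact heven.sub (hb.mul_right _)
  · have hp0 : (p : ℚ) ≠ 0 := by exact_mod_cast hp.ne'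
    push_cast
    field_simp
    ring

/-- Descent step in the construction of the all-even continued fraction
expansion: if `p`, `q` are coprime, `0 < |p| < q` and `p·q` is even, then there
are a nonzero even integer `b` and coprime integers `p'`, `q'` with `q' > 0`,
`|p'| < q'`, `q' < q`, `p'·q'` even, and `p/q = 1/(b + p'/q')`. -/
theorem stmt6 (p q : ℤ) (hcop : IsCoprime p q) (hp : 0 < |p|) (hpq : |p| < q)
    (heven : Even (p * q)) :
    ∃ (b p' q' : ℤ), b ≠ 0 ∧ Even b ∧ IsCoprime p' q' ∧ 0 < q' ∧ |p'| < q' ∧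
      q' < q ∧ Even (p' * q') ∧
      (p : ℚ) / (q : ℚ) = 1 / ((b : ℚ) + (p' : ℚ) / (q' : ℚ)) := by
  rcases lt_or_gt_of_ne (abs_pos.mp hp) with hneg | hpos
  · rw [abs_of_neg hneg] at hpq
    obtain ⟨b, p', q', h⟩ := exists_isEvenCFStep_of_pos (neg_pos.mpr hneg) hpq hcop.neg_left
      (by rwa [neg_mul, even_neg])
    have h' := h.neg
    rw [neg_neg] at h'
    exact ⟨-b, -p', q', h'⟩
  · rw [abs_of_pos hpos] at hpq
    exact exists_isEvenCFStep_of_pos hpos hpq hcop heven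
end

section
/- Let R be a commutative ring, let z be an indeterminate, let (l_i)_{i≥1} and (r_i)_{i≥1} be elements of R, and let x_{−1}, x_0 ∈ R. Define x_n ∈ R[z] for n ≥ 1 recursively by x_n = z·l_n·x_{n−1} + r_n·x_{n−2}. Let C be the set of all strictly decreasing finite integer sequences c = (c_1, c_2, …, c_l) with c_1 = n, c_i − c_{i+1} ∈ {1, 2} for all i, c_l ∈ {0, −1}, and such that if c_l = −1 then c_{l−1} ≠ 0. For c ∈ C set 𝓁(c) = {i : c_i − c_{i+1} = 1}, 𝓇(c) = {i : c_i − c_{i+1} = 2}, and k(c) = |𝓁(c)|. Then x_n = Σ_{c ∈ C} z^{k(c)} · x_{c_l} · Π_{i ∈ 𝓁(c)} l_{c_i} · Π_{i ∈ 𝓇(c)} r_{c_i}. -/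
open Polynomial

/-- The set `C` of strictly decreasing integer sequences `c = (c₁, …, c_l)` with
`c₁ = n`, consecutive differences `cᵢ − cᵢ₊₁ ∈ {1, 2}`, last entry `c_l ∈ {0, −1}`,
and such that only one of `0`, `−1` occurs (if `c_l = −1` then `c_{l−1} ≠ 0`,
which, the sequence being decreasing with steps `1` or `2`, means `0 ∉ c`). -/
def CSeq (n : ℤ) : Set (List ℤ) :=
  {c | c.Chain' (fun a b => a - b = 1 ∨ a - b = 2) ∧ c.head? = some n ∧
        (c.getLast? = some 0 ∨ (c.getLast? = some (-1) ∧ (0 : ℤ) ∉ c))}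

/-- `𝓁(c)`: the (values `cᵢ` at the) positions `i` with `cᵢ − cᵢ₊₁ = 1`,
listed as the first components of consecutive pairs of `c` with difference 1. -/
def lSteps (c : List ℤ) : List (ℤ × ℤ) := (c.zip c.tail).filter (fun p => p.1 - p.2 = 1)

/-- `𝓇(c)`: the consecutive pairs of `c` with difference 2. -/
def rSteps (c : List ℤ) : List (ℤ × ℤ) := (c.zip c.tail).filter (fun p => p.1 - p.2 = 2)

/-- `k(c) = |𝓁(c)|`. -/
def kOf (c : List ℤ) : ℕ := (lSteps c).length

/-!
For `n ≥ 1` a sequence in `C(n)` starts `n, n - 1, …` or `n, n - 2, …`, and its tail is an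
arbitrary element of `C(n - 1)` resp. `C(n - 2)`; removing the head divides the weight by
`z lₙ` resp. `rₙ`. Hence the sums over `C(n)` satisfy the same recursion as `xₙ`, and since
`C(0) = {[0]}` and `C(-1) = {[-1]}` they also have the same initial values. The argument works in
any commutative semiring; the theorem is the case `R[z]` with the coefficients embedded by `C`.
-/

theorem Int.le_induction_two_step {P : ℤ → Prop} {b : ℤ} (h₀ : P b) (h₁ : P (b + 1))
    (hstep : ∀ n, b + 2 ≤ n → P (n - 2) → P (n - 1) → P n) : ∀ n, b ≤ n → P n := by
  suffices ∀ n, b ≤ n → P n ∧ P (n + 1) from fun n hn => (this n hn).1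
  intro n hn
  induction n, hn using Int.leInduction with
  | base => exact ⟨h₀, h₁⟩
  | succ n hn ih =>
    refine ⟨ih.2, hstep _ (by omega) ?_ ?_⟩
    · convert ih.1 using 1; ring
    · convert ih.2 using 1; ring

lemma lt_of_mem_tail_of_isChain {a b : ℤ} {t : List ℤ}
    (h : (a :: t).IsChain (fun a b => a - b = 1 ∨ a - b = 2)) (hb : b ∈ t) : b < a := by
  have hdec : (a :: t).IsChain (· > ·) := h.imp fun _ _ hab => by omega
  exact (List.pairwise_cons.mp (List.isChain_iff_pairwise.mp hdec)).1 b hb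

lemma exists_eq_cons_of_mem_CSeq {n : ℤ} {c : List ℤ} (hc : c ∈ CSeq n) : ∃ t, c = n :: t :=
  List.head?_eq_some_iff.mp hc.2.1

lemma CSeq_zero : CSeq 0 = {[0]} := by
  refine Set.eq_singleton_iff_unique_mem.mpr ⟨⟨List.isChain_singleton _, rfl, .inl rfl⟩, ?_⟩
  rintro c hc
  obtain ⟨t, rfl⟩ := exists_eq_cons_of_mem_CSeq hc
  obtain ⟨hchain, -, hlast | ⟨-, h0⟩⟩ := hc
  · cases t with
    | nil => rfl
    | cons b t =>
      rw [List.getLast?_cons_cons] at hlast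
      exact absurd (lt_of_mem_tail_of_isChain hchain (List.mem_of_getLast? hlast)) (lt_irrefl 0)
  · exact absurd List.mem_cons_self h0

lemma CSeq_neg_one : CSeq (-1) = {[-1]} := by
  refine Set.eq_singleton_iff_unique_mem.mpr
    ⟨⟨List.isChain_singleton _, rfl, .inr ⟨rfl, by simp⟩⟩, ?_⟩
  rintro c hc
  obtain ⟨t, rfl⟩ := exists_eq_cons_of_mem_CSeq hc
  cases t with
  | nil => rfl
  | cons b t =>
    obtain ⟨hchain, -, hlast⟩ := hc
    rw [List.getLast?_cons_cons] at hlast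
    rcases hlast with h | ⟨h, -⟩ <;>
      have := lt_of_mem_tail_of_isChain hchain (List.mem_of_getLast? h) <;> omega

lemma cons_cons_mem_CSeq_iff {n m : ℤ} {t : List ℤ} (hn : n ≠ 0) :
    n :: m :: t ∈ CSeq n ↔ (n - m = 1 ∨ n - m = 2) ∧ m :: t ∈ CSeq m := by
  simp only [CSeq, Set.mem_ofPred_eq, List.head?_cons, List.getLast?_cons_cons, List.mem_cons,
    hn.symm, false_or, true_and]
  exact (and_congr_left' List.isChain_cons_cons).trans and_assoc

lemma CSeq_eq_image_cons {n : ℤ} (hn : 1 ≤ n) :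
    CSeq n = List.cons n '' (CSeq (n - 1) ∪ CSeq (n - 2)) := by
  ext c
  constructor
  · intro hc
    obtain ⟨t, rfl⟩ := exists_eq_cons_of_mem_CSeq hc
    cases t with
    | nil =>
      obtain ⟨-, -, h | ⟨h, -⟩⟩ := hc <;> simp at h <;> omega
    | cons m t =>
      obtain ⟨hm | hm, ht⟩ := (cons_cons_mem_CSeq_iff (by omega)).mp hc
      · exact ⟨m :: t, .inl (by rwa [show n - 1 = m by omega]), rfl⟩
      · exact ⟨m :: t, .inr (by rwa [show n - 2 = m by omega]), rfl⟩
  · rintro ⟨t, ht, rfl⟩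
    have ⟨m, hm, ht⟩ : ∃ m, (n - m = 1 ∨ n - m = 2) ∧ t ∈ CSeq m := by
      rcases ht with ht | ht
      · exact ⟨_, by omega, ht⟩
      · exact ⟨_, by omega, ht⟩
    obtain ⟨t, rfl⟩ := exists_eq_cons_of_mem_CSeq ht
    exact (cons_cons_mem_CSeq_iff (by omega)).mpr ⟨hm, ht⟩

lemma disjoint_CSeq {m m' : ℤ} (h : m ≠ m') : Disjoint (CSeq m) (CSeq m') :=
  Set.disjoint_left.mpr fun _ hc hc' => h (Option.some.inj (hc.2.1.symm.trans hc'.2.1))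

lemma CSeq_finite {n : ℤ} (hn : -1 ≤ n) : (CSeq n).Finite := by
  refine Int.le_induction_two_step (P := fun n => (CSeq n).Finite)
    (by simp [CSeq_neg_one]) (by simp [CSeq_zero]) (fun n hn h₂ h₁ => ?_) n hn
  rw [CSeq_eq_image_cons (by omega)]
  exact (h₁.union h₂).image _

section chainWeight

variable {A : Type*} [CommSemiring A] (z : A) (l r x : ℤ → A)

def chainWeight (c : List ℤ) : A :=
  z ^ kOf c * x (c.getLastD 0) * ((lSteps c).map fun p => l p.1).prod *
    ((rSteps c).map fun p => r p.1).prod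

lemma chainWeight_singleton (m : ℤ) : chainWeight z l r x [m] = x m := by
  simp [chainWeight, kOf, lSteps, rSteps]

lemma chainWeight_cons_cons_of_sub_eq_one {n m : ℤ} (t : List ℤ) (h : n - m = 1) :
    chainWeight z l r x (n :: m :: t) = z * l n * chainWeight z l r x (m :: t) := by
  simp [chainWeight, kOf, lSteps, rSteps, h]
  ring

lemma chainWeight_cons_cons_of_sub_eq_two {n m : ℤ} (t : List ℤ) (h : n - m = 2) :
    chainWeight z l r x (n :: m :: t) = r n * chainWeight z l r x (m :: t) := by
  simp [chainWeight, kOf, lSteps, rSteps, h]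
  ring

variable {z l r x}

lemma finsum_CSeq_chainWeight_cons {n m : ℤ} (hm : -1 ≤ m) {a : A}
    (ha : ∀ t, chainWeight z l r x (n :: m :: t) = a * chainWeight z l r x (m :: t)) :
    ∑ᶠ c ∈ CSeq m, chainWeight z l r x (n :: c) = a * ∑ᶠ c ∈ CSeq m, chainWeight z l r x c := by
  rw [mul_finsum_mem' _ _ (CSeq_finite hm)]
  refine finsum_mem_congr rfl fun c hc => ?_
  obtain ⟨t, rfl⟩ := exists_eq_cons_of_mem_CSeq hc
  exact ha t

lemma finsum_CSeq_chainWeight_of_one_le {n : ℤ} (hn : 1 ≤ n) :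
    ∑ᶠ c ∈ CSeq n, chainWeight z l r x c =
      z * l n * ∑ᶠ c ∈ CSeq (n - 1), chainWeight z l r x c +
        r n * ∑ᶠ c ∈ CSeq (n - 2), chainWeight z l r x c := by
  rw [CSeq_eq_image_cons hn, finsum_mem_image List.cons_injective.injOn,
    finsum_mem_union (disjoint_CSeq (by omega)) (CSeq_finite (by omega)) (CSeq_finite (by omega)),
    finsum_CSeq_chainWeight_cons (by omega)
      (chainWeight_cons_cons_of_sub_eq_one z l r x · (by omega)),
    finsum_CSeq_chainWeight_cons (by omega)
      (chainWeight_cons_cons_of_sub_eq_two z l r x · (by omega))]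

theorem eq_finsum_CSeq_chainWeight
    (hrec : ∀ m : ℤ, 1 ≤ m → x m = z * l m * x (m - 1) + r m * x (m - 2))
    {n : ℤ} (hn : -1 ≤ n) : x n = ∑ᶠ c ∈ CSeq n, chainWeight z l r x c := by
  refine Int.le_induction_two_step
    (P := fun n => x n = ∑ᶠ c ∈ CSeq n, chainWeight z l r x c)
    (by simp [CSeq_neg_one, chainWeight_singleton])
    (by simp [CSeq_zero, chainWeight_singleton]) (fun n hn h₂ h₁ => ?_) n hn
  rw [finsum_CSeq_chainWeight_of_one_le (by omega), hrec n (by omega), ← h₁, ← h₂]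

end chainWeight

theorem stmt7_general {R : Type*} [CommRing R] (l r : ℤ → R)
    (x : ℤ → Polynomial R)
    (hrec : ∀ m : ℤ, 1 ≤ m →
      x m = X * C (l m) * x (m - 1) + C (r m) * x (m - 2))
    (n : ℤ) (hn : 1 ≤ n) :
    x n = ∑ᶠ c ∈ CSeq n,
      X ^ kOf c * x (c.getLastD 0) *
        C (((lSteps c).map (fun p => l p.1)).prod) *
        C (((rSteps c).map (fun p => r p.1)).prod) := by
  rw [eq_finsum_CSeq_chainWeight (z := X) (l := fun m => C (l m)) (r := fun m => C (r m)) hrec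
    (by omega)]
  simp only [chainWeight, map_list_prod, List.map_map, Function.comp_def]

/-- Closed form for the solution of the two-step recursion
`xₙ = z·lₙ·xₙ₋₁ + rₙ·xₙ₋₂` in `R[z]`, as a sum over the computational tree:
`xₙ = Σ_{c ∈ C} z^{k(c)} · x_{c_l} · Π_{i ∈ 𝓁(c)} l_{cᵢ} · Π_{i ∈ 𝓇(c)} r_{cᵢ}`. -/
theorem stmt7 {R : Type*} [CommRing R] (l r : ℤ → R) (xZero xNegOne : R)
    (x : ℤ → Polynomial R) (h0 : x 0 = C xZero) (hneg : x (-1) = C xNegOne)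
    (hrec : ∀ m : ℤ, 1 ≤ m →
      x m = X * C (l m) * x (m - 1) + C (r m) * x (m - 2))
    (n : ℤ) (hn : 1 ≤ n) :
    x n = ∑ᶠ c ∈ CSeq n,
      X ^ kOf c * x (c.getLastD 0) *
        C (((lSteps c).map (fun p => l p.1)).prod) *
        C (((rSteps c).map (fun p => r p.1)).prod) :=
  stmt7_general l r x hrec n hn
end

section
/- Let R be a commutative ring, let z be an indeterminate, let (l_i)_{i≥1} and (r_i)_{i≥1} be elements of R, and let x_{−1}, x_0 ∈ R. Define x_n ∈ R[z] for n ≥ 1 recursively by x_n = z·l_n·x_{n−1} + r_n·x_{n−2}. For a subset C ⊆ {1, …, n} write C − 1 = {c − 1 : c ∈ C}, and set e(C) = −1 if 1 ∈ C and e(C) = 0 otherwise, and k(C) = n − 2|C| + (1 if 1 ∈ C, else 0). Then x_n = Σ_C z^{k(C)} · x_{e(C)} · Π_{m ∈ C} r_m · Π_{m ∈ {1,…,n} \ (C ∪ (C−1))} l_m, where the sum is over all subsets C ⊆ {1, …, n} with C ∩ (C − 1) = ∅. -/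
open Polynomial

/-!
Split the admissible sets `C ⊆ {1, …, N + 2}` according to whether `N + 2 ∈ C`. Those without
`N + 2` are the admissible subsets of `{1, …, N + 1}`, and each of their terms gains the factor
`z · l_{N+2}`; those with `N + 2` are `insert (N + 2) C'` for an admissible `C' ⊆ {1, …, N}` (as
`N + 1 ∉ C`), and each of their terms gains the factor `r_{N+2}`. Hence the closed form satisfies
the recursion, and it agrees with `x` at `n = 0, 1` with `x_{-1}, x_0` left symbolic.
-/

namespace TwoStepRecursion

open Finset

def nonAdjacentSubsets (N : ℕ) : Finset (Finset ℕ) :=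
  (Icc 1 N).powerset.filter (fun s => s ∩ s.image (· - 1) = ∅)

theorem mem_nonAdjacentSubsets {N : ℕ} {s : Finset ℕ} :
    s ∈ nonAdjacentSubsets N ↔ s ⊆ Icc 1 N ∧ ∀ a ∈ s, a + 1 ∉ s := by
  simp only [nonAdjacentSubsets, mem_filter, mem_powerset, eq_empty_iff_forall_notMem, mem_inter,
    mem_image, not_and, not_exists]
  refine and_congr_right fun hs => ⟨fun h a ha ha1 => h a ha (a + 1) ha1 rfl, ?_⟩
  rintro h a ha b hb rfl
  have := (mem_Icc.1 (hs hb)).1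
  exact h _ ha (by rwa [Nat.sub_add_cancel this])

theorem two_mul_card_le {N : ℕ} {s : Finset ℕ} (hs : s ∈ nonAdjacentSubsets N) :
    2 * #s ≤ N + if 1 ∈ s then 1 else 0 := by
  obtain ⟨hsub, hsep⟩ := mem_nonAdjacentSubsets.1 hs
  have hbound : ∀ a ∈ s, 1 ≤ a ∧ a ≤ N := fun a ha => mem_Icc.1 (hsub ha)
  have hdisj : Disjoint s (s.image (· - 1)) := by
    refine disjoint_right.2 fun b hb hbs => ?_
    obtain ⟨a, ha, rfl⟩ := mem_image.1 hb
    exact hsep _ hbs (by rwa [Nat.sub_add_cancel (hbound a ha).1])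
  have hcard : #(s.image (· - 1)) = #s :=
    card_image_of_injOn fun a ha b hb hab => by
      have := hbound a ha; have := hbound b hb; omega
  have hunion : s ∪ s.image (· - 1) ⊆ Icc (if 1 ∈ s then 0 else 1) N := by
    intro a ha
    simp only [mem_union, mem_image] at ha
    rcases ha with ha | ⟨b, hb, rfl⟩
    · have := hbound a ha; split_ifs <;> exact mem_Icc.2 (by omega)
    · have := hbound b hb
      split_ifs with h1
      · exact mem_Icc.2 (by omega)
      · have : b ≠ 1 := by rintro rfl; exact h1 hb
        exact mem_Icc.2 (by omega)
  have := card_le_card hunion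
  rw [card_union_of_disjoint hdisj, hcard, Nat.card_Icc] at this
  split_ifs at this ⊢ <;> omega

theorem notMem_of_mem_nonAdjacentSubsets {N a : ℕ} {s : Finset ℕ}
    (hs : s ∈ nonAdjacentSubsets N) (ha : N < a) : a ∉ s := fun h => by
  have := mem_Icc.1 ((mem_nonAdjacentSubsets.1 hs).1 h); omega

theorem filter_notMem_nonAdjacentSubsets_succ (N : ℕ) :
    (nonAdjacentSubsets (N + 1)).filter (N + 1 ∉ ·) = nonAdjacentSubsets N := by
  ext s
  simp only [mem_filter, mem_nonAdjacentSubsets, and_right_comm]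
  refine and_congr_left fun _ => ⟨fun ⟨hs, hN⟩ a ha => ?_, fun hs => ⟨fun a ha => ?_, fun hN => ?_⟩⟩
  · have : a ≠ N + 1 := by rintro rfl; exact hN ha
    have := mem_Icc.1 (hs ha); exact mem_Icc.2 (by omega)
  · have := mem_Icc.1 (hs ha); exact mem_Icc.2 (by omega)
  · have := mem_Icc.1 (hs hN); omega

theorem filter_mem_nonAdjacentSubsets_add_two (N : ℕ) :
    (nonAdjacentSubsets (N + 2)).filter (N + 2 ∈ ·)
      = (nonAdjacentSubsets N).image (insert (N + 2)) := by
  ext s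
  simp only [mem_filter, mem_image, mem_nonAdjacentSubsets]
  constructor
  · rintro ⟨⟨hs, hsep⟩, hN⟩
    refine ⟨s.erase (N + 2), ⟨fun a ha => ?_, fun a ha ha1 => ?_⟩, insert_erase hN⟩
    · obtain ⟨hne, ha⟩ := mem_erase.1 ha
      have : a ≠ N + 1 := by rintro rfl; exact hsep _ ha hN
      have := mem_Icc.1 (hs ha); exact mem_Icc.2 (by omega)
    · exact hsep a (mem_of_mem_erase ha) (mem_of_mem_erase ha1)
  · rintro ⟨t, ⟨ht, hsep⟩, rfl⟩
    have hbound : ∀ a ∈ t, 1 ≤ a ∧ a ≤ N := fun a ha => mem_Icc.1 (ht ha)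
    refine ⟨⟨fun a ha => ?_, fun a ha ha1 => ?_⟩, mem_insert_self _ _⟩
    · rcases mem_insert.1 ha with rfl | ha
      · exact mem_Icc.2 (by omega)
      · have := hbound a ha; exact mem_Icc.2 (by omega)
    · rcases mem_insert.1 ha with rfl | ha <;> rcases mem_insert.1 ha1 with h | ha1
      · omega
      · have := hbound _ ha1; omega
      · have := hbound a ha; omega
      · exact hsep a ha ha1

def oneStepIndices (N : ℕ) (s : Finset ℕ) : Finset ℕ :=
  Icc 1 N \ (s ∪ s.image (· - 1))

theorem oneStepIndices_succ {N : ℕ} {s : Finset ℕ} (hs : s ∈ nonAdjacentSubsets N) :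
    oneStepIndices (N + 1) s = insert (N + 1) (oneStepIndices N s) := by
  ext a
  simp only [oneStepIndices, mem_sdiff, mem_insert, mem_Icc, mem_union, mem_image]
  constructor
  · rintro ⟨ha, hU⟩
    by_cases haN : a = N + 1
    · exact .inl haN
    · exact .inr ⟨by omega, hU⟩
  · rintro (rfl | ⟨ha, hU⟩)
    · refine ⟨by omega, ?_⟩
      rintro (h | ⟨b, hb, hb1⟩)
      · exact notMem_of_mem_nonAdjacentSubsets hs (by omega) h
      · exact notMem_of_mem_nonAdjacentSubsets hs (by omega) hb
    · exact ⟨by omega, hU⟩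

theorem oneStepIndices_insert (N : ℕ) (t : Finset ℕ) :
    oneStepIndices (N + 2) (insert (N + 2) t) = oneStepIndices N t := by
  rw [oneStepIndices, oneStepIndices, image_insert, insert_union, union_insert]
  ext a
  by_cases ha : a ∈ t ∪ t.image (· - 1)
  · simp [ha]
  · simp [ha]; omega

section ClosedForm

variable {R : Type*} [CommSemiring R] (l r : ℕ → R) (x : ℤ → R[X])

noncomputable def closedFormTerm (N : ℕ) (s : Finset ℕ) : R[X] :=
  X ^ ((N + if 1 ∈ s then 1 else 0) - 2 * #s) * x (if 1 ∈ s then -1 else 0) *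
    C (∏ m ∈ s, r m) * C (∏ m ∈ oneStepIndices N s, l m)

noncomputable def closedForm (N : ℕ) : R[X] :=
  ∑ s ∈ nonAdjacentSubsets N, closedFormTerm l r x N s

theorem closedFormTerm_succ {N : ℕ} {s : Finset ℕ} (hs : s ∈ nonAdjacentSubsets N) :
    closedFormTerm l r x (N + 1) s = X * C (l (N + 1)) * closedFormTerm l r x N s := by
  have hexp : (N + 1 + if 1 ∈ s then 1 else 0) - 2 * #s
      = ((N + if 1 ∈ s then 1 else 0) - 2 * #s) + 1 := by
    have := two_mul_card_le hs
    split_ifs at this ⊢ <;> omega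
  have hN : N + 1 ∉ oneStepIndices N s := by simp [oneStepIndices]
  rw [closedFormTerm, closedFormTerm, hexp, oneStepIndices_succ hs, prod_insert hN, pow_succ, C_mul]
  ring

theorem closedFormTerm_insert {N : ℕ} {t : Finset ℕ} (ht : t ∈ nonAdjacentSubsets N) :
    closedFormTerm l r x (N + 2) (insert (N + 2) t)
      = C (r (N + 2)) * closedFormTerm l r x N t := by
  have hN : N + 2 ∉ t := notMem_of_mem_nonAdjacentSubsets ht (by omega)
  have h1 : 1 ∈ insert (N + 2) t ↔ 1 ∈ t := by simp
  have hexp : (N + 2 + if 1 ∈ t then 1 else 0) - 2 * (#t + 1)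
      = (N + if 1 ∈ t then 1 else 0) - 2 * #t := by
    omega
  rw [closedFormTerm, closedFormTerm, if_congr h1 rfl rfl, if_congr h1 rfl rfl,
    card_insert_of_notMem hN, hexp, oneStepIndices_insert, prod_insert hN, C_mul]
  ring

theorem sum_filter_notMem_closedFormTerm_succ (N : ℕ) :
    ∑ s ∈ nonAdjacentSubsets (N + 1) with N + 1 ∉ s, closedFormTerm l r x (N + 1) s
      = X * C (l (N + 1)) * closedForm l r x N := by
  rw [filter_notMem_nonAdjacentSubsets_succ, closedForm, mul_sum]
  exact sum_congr rfl fun s hs => closedFormTerm_succ l r x hs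

theorem closedForm_zero : closedForm l r x 0 = x 0 := by
  have : nonAdjacentSubsets 0 = {∅} := by decide
  simp [closedForm, this, closedFormTerm, oneStepIndices]

theorem closedForm_one : closedForm l r x 1 = X * C (l 1) * x 0 + C (r 1) * x (-1) := by
  have hsubsets : nonAdjacentSubsets 1 = {∅, {1}} := by decide
  have hindices : ({1} : Finset ℕ) \ {1, 0} = ∅ := by decide
  simp [closedForm, hsubsets, closedFormTerm, oneStepIndices, hindices]
  ring

theorem closedForm_add_two (N : ℕ) :
    closedForm l r x (N + 2)
      = X * C (l (N + 2)) * closedForm l r x (N + 1) + C (r (N + 2)) * closedForm l r x N := by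
  conv_lhs => rw [closedForm, ← sum_filter_not_add_sum_filter _ (N + 2 ∈ ·)]
  rw [sum_filter_notMem_closedFormTerm_succ l r x (N + 1), filter_mem_nonAdjacentSubsets_add_two,
    sum_image]
  · congr 1
    rw [closedForm, mul_sum]
    exact sum_congr rfl fun t ht => closedFormTerm_insert l r x ht
  · intro s hs t ht hst
    rw [← erase_insert (notMem_of_mem_nonAdjacentSubsets hs (by omega : N < N + 2)),
      ← erase_insert (notMem_of_mem_nonAdjacentSubsets ht (by omega : N < N + 2)), hst]

theorem eq_closedForm
    (hrec : ∀ m : ℕ, 1 ≤ m → x m = X * C (l m) * x ((m : ℤ) - 1) + C (r m) * x ((m : ℤ) - 2))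
    (n : ℕ) : x n = closedForm l r x n := by
  induction n using Nat.twoStepInduction with
  | zero => exact (closedForm_zero l r x).symm
  | one => rw [closedForm_one, hrec 1 le_rfl]; norm_num
  | more n ih₀ ih₁ =>
    have h₁ : ((n + 2 : ℕ) : ℤ) - 1 = (n + 1 : ℕ) := by push_cast; ring
    have h₂ : ((n + 2 : ℕ) : ℤ) - 2 = n := by push_cast; ring
    rw [hrec (n + 2) (by omega), h₁, h₂, ih₀, ih₁, closedForm_add_two]

end ClosedForm

end TwoStepRecursion

theorem stmt8_general {R : Type*} [CommRing R] (n : ℕ) (l r : ℕ → R)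
    (x : ℤ → Polynomial R)
    (hrec : ∀ m : ℕ, 1 ≤ m →
      x m = X * C (l m) * x ((m : ℤ) - 1) + C (r m) * x ((m : ℤ) - 2)) :
    x n = ∑ s ∈ (Finset.Icc 1 n).powerset.filter (fun s => s ∩ s.image (· - 1) = ∅),
      X ^ ((n + if 1 ∈ s then 1 else 0) - 2 * s.card) *
        x (if 1 ∈ s then -1 else 0) *
        C (∏ m ∈ s, r m) *
        C (∏ m ∈ Finset.Icc 1 n \ (s ∪ s.image (· - 1)), l m) :=
  TwoStepRecursion.eq_closedForm l r x hrec n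

/-- Closed form for the solution of the two-step recursion
`xₙ = z·lₙ·xₙ₋₁ + rₙ·xₙ₋₂` in `R[z]`, with terms collected according to the set
`C ⊆ {1, …, n}` (with `C ∩ (C−1) = ∅`) of indices where the two-step factor `r`
is used:
`xₙ = Σ_C z^{k(C)} · x_{e(C)} · Π_{m ∈ C} r_m · Π_{m ∈ {1,…,n} ∖ (C ∪ (C−1))} l_m`,
where `e(C) = −1` if `1 ∈ C` and `0` otherwise, and
`k(C) = n − 2|C| + (1 if 1 ∈ C else 0)`. -/
theorem stmt8 {R : Type*} [CommRing R] (n : ℕ) (hn : 1 ≤ n) (l r : ℕ → R)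
    (xZero xNegOne : R)
    (x : ℤ → Polynomial R) (h0 : x 0 = C xZero) (hneg : x (-1) = C xNegOne)
    (hrec : ∀ m : ℕ, 1 ≤ m →
      x m = X * C (l m) * x ((m : ℤ) - 1) + C (r m) * x ((m : ℤ) - 2)) :
    x n = ∑ s ∈ (Finset.Icc 1 n).powerset.filter (fun s => s ∩ s.image (· - 1) = ∅),
      X ^ ((n + if 1 ∈ s then 1 else 0) - 2 * s.card) *
        x (if 1 ∈ s then -1 else 0) *
        C (∏ m ∈ s, r m) *
        C (∏ m ∈ Finset.Icc 1 n \ (s ∪ s.image (· - 1)), l m) :=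
  stmt8_general n l r x hrec
end

section
/- Let R be a commutative ring, let a ∈ R be invertible, and let z, u, v ∈ R. Suppose y is a function from the even integers to R with y_0 = u satisfying a·y_{n−2} − a^{−1}·y_n = z·v for every even integer n. Then for every even integer n one has (a − a^{−1})·y_n = a^n·(a − a^{−1})·u + z·(1 − a^n)·v. -/
/-! With `d = a - a⁻¹`, the relation says `a⁻¹·yₙ = a·y_{n-2} - z·v`, and since `a·d + 1 = a²`
the shifted quantity `wₙ = d·yₙ - z·v` satisfies `wₙ = a²·w_{n-2}`. Hence `wₙ = aⁿ·w₀` for every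
even `n`, which is the claimed identity rearranged. -/

theorem eq_zpow_smul_of_succ_eq_smul {G α : Type*} [Group G] [MulAction G α] (c : G)
    (w : ℤ → α) (hw : ∀ k, w (k + 1) = c • w k) (k : ℤ) : w k = c ^ k • w 0 := by
  induction k using Int.induction_on with
  | zero => simp
  | succ k ih => rw [hw, ih, smul_smul, ← zpow_one_add, add_comm]
  | pred k ih =>
    have h := hw (-k - 1)
    rw [sub_add_cancel, ih, ← inv_smul_eq_iff, smul_smul, ← zpow_neg_one, ← zpow_add] at h
    rw [← h, add_comm, sub_eq_add_neg]

/-- The algebraic identity underlying the reduction formula for the HOMFLY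
polynomial: if `a` is invertible, `y` is defined on even integers with `y₀ = u`
and satisfies the skein-type relation `a·y_{n−2} − a⁻¹·yₙ = z·v` for every even
`n`, then `(a − a⁻¹)·yₙ = aⁿ·(a − a⁻¹)·u + z·(1 − aⁿ)·v` for every even `n`. -/
theorem stmt9 {R : Type*} [CommRing R] (a : Rˣ) (z u v : R) (y : ℤ → R)
    (hy0 : y 0 = u)
    (hrec : ∀ n : ℤ, Even n → (a : R) * y (n - 2) - (↑a⁻¹ : R) * y n = z * v) :
    ∀ n : ℤ, Even n →
      ((a : R) - ↑a⁻¹) * y n =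
        (↑(a ^ n) : R) * ((a : R) - ↑a⁻¹) * u + z * (1 - (↑(a ^ n) : R)) * v := by
  rintro n ⟨k, rfl⟩
  set w : ℤ → R := fun k ↦ ((a : R) - ↑a⁻¹) * y (2 * k) - z * v
  have hstep : ∀ k, w (k + 1) = a ^ 2 • w k := by
    intro k
    have h := hrec (2 * (k + 1)) (even_two_mul _)
    rw [show 2 * (k + 1) - 2 = 2 * k by ring] at h
    simp only [w, Units.smul_def, Units.val_pow_eq_pow_val]
    linear_combination (-(a : R) * ((a : R) - ↑a⁻¹)) * h -
      (((a : R) - ↑a⁻¹) * y (2 * (k + 1)) - z * v) * a.mul_inv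
  have hw := eq_zpow_smul_of_succ_eq_smul _ w hstep k
  simp only [w, Units.smul_def, ← zpow_natCast, ← zpow_mul, mul_zero, hy0] at hw
  rw [← two_mul]
  push_cast at hw
  linear_combination hw
end

section
/- Let n ≥ 1 and let b_1, …, b_n be nonzero even integers. In the field ℚ(a, z) of rational functions in two variables over ℚ, define x_{−1} = z^{−1}·(a − a^{−1}), x_0 = 1, and for 1 ≤ m ≤ n define x_m = z·((1 − a^{ε_m b_m})/(a − a^{−1}))·x_{m−1} + a^{ε_m b_m}·x_{m−2}, where ε_m = (−1)^{m−1}. Let C be the set of all strictly decreasing finite integer sequences c = (c_1, …, c_l) with c_1 = n, c_i − c_{i+1} ∈ {1, 2} for all i, c_l ∈ {0, −1}, and such that if c_l = −1 then c_{l−1} ≠ 0; for c ∈ C set 𝓁(c) = {i : c_i − c_{i+1} = 1}, 𝓇(c) = {i : c_i − c_{i+1} = 2}, and k(c) = |𝓁(c)|. Then x_n = Σ_{c ∈ C} z^{k(c)} · x_{c_l} · Π_{i ∈ 𝓁(c)} (1 − a^{(−1)^{c_i − 1} b_{c_i}})/(a − a^{−1}) · Π_{i ∈ 𝓇(c)}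 a^{(−1)^{c_i − 1} b_{c_i}}. -/
/-- The field `ℚ(a, z)` of rational functions in two indeterminates over `ℚ`. -/
abbrev RatFunc2 : Type := FractionRing (MvPolynomial (Fin 2) ℚ)

/-! Unfolding the recursion `x_m = L_m x_{m-1} + R_m x_{m-2}` expresses `x_n` as a sum over the
descending paths from `n` with steps of size 1 (weight `L`) or 2 (weight `R`) that stop as soon as
they reach `0` or `-1`; these paths are exactly `CSeq n`. A path contributes the product of its
step weights times `x` at its endpoint. The formula is the case `L_m = z(1 - a^{ε_m b_m})/(a - a⁻¹)`,
`R_m = a^{ε_m b_m}`, in which the factors `z` collect into `z^{k(c)}`. -/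
namespace CSeq

lemma mem_iff {m : ℤ} {c : List ℤ} : c ∈ CSeq m ↔
    c.IsChain (fun a b => a - b = 1 ∨ a - b = 2) ∧ c.head? = some m ∧
      (c.getLast? = some 0 ∨ (c.getLast? = some (-1) ∧ (0 : ℤ) ∉ c)) :=
  Iff.rfl

lemma singleton_mem_iff {m : ℤ} : [m] ∈ CSeq m ↔ m = 0 ∨ m = -1 := by
  simp only [mem_iff, List.IsChain.singleton, List.head?_cons, List.getLast?_singleton,
    Option.some.injEq, List.mem_singleton, true_and]
  omega

lemma subset_singleton_of_nonpos {m : ℤ} (hm : m ≤ 0) : CSeq m ⊆ {[m]} := by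
  rintro (_ | ⟨v, _ | ⟨w, t⟩⟩) ⟨hchain, hhead, hlast⟩
  · simp at hhead
  · simpa using hhead
  · -- a path with two entries ends below `m ≤ 0`, so at `-1`, having passed through `m = 0`
    exfalso
    simp only [List.head?_cons, Option.some.injEq] at hhead
    subst hhead
    have hdecr : (v :: w :: t).IsChain (fun a b => b < a) := hchain.imp fun h => by omega
    have hlt : ∀ y ∈ w :: t, y < v := (List.pairwise_cons.mp (List.isChain_iff_pairwise.mp hdecr)).1
    rw [List.getLast?_cons_cons] at hlast
    rcases hlast with h0 | ⟨h1, h0⟩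
    · linarith [hlt 0 (List.mem_of_getLast? h0)]
    · have := hlt (-1) (List.mem_of_getLast? h1)
      exact h0 (by rw [show (0 : ℤ) = v by omega]; exact List.mem_cons_self)

lemma zero : CSeq 0 = {[0]} :=
  (subset_singleton_of_nonpos le_rfl).antisymm (by simp [singleton_mem_iff])

lemma neg_one : CSeq (-1) = {[-1]} :=
  (subset_singleton_of_nonpos (by norm_num)).antisymm (by simp [singleton_mem_iff])

lemma cons_mem_iff {m : ℤ} (hm : 1 ≤ m) (c : List ℤ) :
    m :: c ∈ CSeq m ↔ c ∈ CSeq (m - 1) ∨ c ∈ CSeq (m - 2) := by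
  rcases c with _ | ⟨w, t⟩
  · simp only [mem_iff, List.getLast?_singleton, Option.some.injEq, List.head?_nil, reduceCtorEq,
      false_and, and_false, or_false, iff_false]
    omega
  · simp only [mem_iff, List.isChain_cons_cons, List.head?_cons,
      Option.some.injEq, List.getLast?_cons_cons, List.mem_cons, true_and]
    have hm0 : (0 : ℤ) ≠ m := by omega
    simp only [hm0, false_or]
    constructor
    · rintro ⟨⟨h | h, hchain⟩, hlast⟩
      · exact Or.inl ⟨hchain, by omega, hlast⟩
      · exact Or.inr ⟨hchain, by omega, hlast⟩
    · rintro (⟨hchain, hw, hlast⟩ | ⟨hchain, hw, hlast⟩)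
      · exact ⟨⟨Or.inl (by omega), hchain⟩, hlast⟩
      · exact ⟨⟨Or.inr (by omega), hchain⟩, hlast⟩

lemma eq_image_cons {m : ℤ} (hm : 1 ≤ m) :
    CSeq m = List.cons m '' CSeq (m - 1) ∪ List.cons m '' CSeq (m - 2) := by
  ext (_ | ⟨v, c⟩)
  · simp [mem_iff]
  · by_cases hv : v = m
    · subst hv
      simp [cons_mem_iff hm]
    · simp [mem_iff, hv, Ne.symm hv]

lemma finite (m : ℤ) : (CSeq m).Finite := by
  suffices h : ∀ k : ℕ, ∀ m : ℤ, m ≤ k → (CSeq m).Finite from h m.toNat m (Int.self_le_toNat m)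
  intro k
  induction k with
  | zero => exact fun m hm => (Set.finite_singleton _).subset (subset_singleton_of_nonpos hm)
  | succ k ih =>
    intro m hm
    rcases le_or_gt m k with hmk | hmk
    · exact ih m hmk
    · rw [eq_image_cons (by omega)]
      exact ((ih _ (by omega)).image _).union ((ih _ (by omega)).image _)

lemma disjoint_image_cons (m : ℤ) :
    Disjoint (List.cons m '' CSeq (m - 1)) (List.cons m '' CSeq (m - 2)) := by
  rw [Set.disjoint_left]
  rintro _ ⟨c, hc, rfl⟩ ⟨c', hc', hcc'⟩
  obtain rfl : c' = c := List.cons_injective hcc'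
  have := hc.2.1.symm.trans hc'.2.1
  simp at this

end CSeq

lemma lSteps_cons_cons (m w : ℤ) (t : List ℤ) :
    lSteps (m :: w :: t) = if m - w = 1 then (m, w) :: lSteps (w :: t) else lSteps (w :: t) := by
  simp only [lSteps, List.tail_cons, List.zip_cons_cons, List.filter_cons, decide_eq_true_eq]

lemma rSteps_cons_cons (m w : ℤ) (t : List ℤ) :
    rSteps (m :: w :: t) = if m - w = 2 then (m, w) :: rSteps (w :: t) else rSteps (w :: t) := by
  simp only [rSteps, List.tail_cons, List.zip_cons_cons, List.filter_cons, decide_eq_true_eq]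

section PathWeight

variable {S : Type*} [CommSemiring S] (L R x : ℤ → S)

def pathWeight (c : List ℤ) : S :=
  ((lSteps c).map (fun p => L p.1)).prod * ((rSteps c).map (fun p => R p.1)).prod *
    x (c.getLastD 0)

lemma pathWeight_singleton (m : ℤ) : pathWeight L R x [m] = x m := by
  simp [pathWeight, lSteps, rSteps]

lemma pathWeight_cons_of_head_eq_sub_one {m : ℤ} {c : List ℤ} (h : c.head? = some (m - 1)) :
    pathWeight L R x (m :: c) = L m * pathWeight L R x c := by
  obtain ⟨t, rfl⟩ : ∃ t, c = (m - 1) :: t := by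
    rcases c with _ | ⟨w, t⟩ <;> simp_all
  simp only [pathWeight, lSteps_cons_cons, rSteps_cons_cons, List.getLastD_cons, sub_sub_cancel,
    if_pos, if_neg (show (1 : ℤ) ≠ 2 by norm_num), List.map_cons, List.prod_cons]
  ring

lemma pathWeight_cons_of_head_eq_sub_two {m : ℤ} {c : List ℤ} (h : c.head? = some (m - 2)) :
    pathWeight L R x (m :: c) = R m * pathWeight L R x c := by
  obtain ⟨t, rfl⟩ : ∃ t, c = (m - 2) :: t := by
    rcases c with _ | ⟨w, t⟩ <;> simp_all
  simp only [pathWeight, lSteps_cons_cons, rSteps_cons_cons, List.getLastD_cons, sub_sub_cancel,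
    if_pos, if_neg (show (2 : ℤ) ≠ 1 by norm_num), List.map_cons, List.prod_cons]
  ring

lemma finsum_pathWeight_eq {m : ℤ} (hm : 1 ≤ m) :
    ∑ᶠ c ∈ CSeq m, pathWeight L R x c =
      L m * ∑ᶠ c ∈ CSeq (m - 1), pathWeight L R x c +
        R m * ∑ᶠ c ∈ CSeq (m - 2), pathWeight L R x c := by
  rw [CSeq.eq_image_cons hm, finsum_mem_union (CSeq.disjoint_image_cons m)
      ((CSeq.finite _).image _) ((CSeq.finite _).image _),
    finsum_mem_image List.cons_injective.injOn, finsum_mem_image List.cons_injective.injOn,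
    mul_finsum_mem' _ _ (CSeq.finite _), mul_finsum_mem' _ _ (CSeq.finite _),
    finsum_mem_congr rfl fun c hc => pathWeight_cons_of_head_eq_sub_one L R x hc.2.1,
    finsum_mem_congr rfl fun c hc => pathWeight_cons_of_head_eq_sub_two L R x hc.2.1]

theorem eq_finsum_pathWeight_of_rec {n : ℤ} (hn : -1 ≤ n)
    (hrec : ∀ m, 1 ≤ m → m ≤ n → x m = L m * x (m - 1) + R m * x (m - 2)) :
    x n = ∑ᶠ c ∈ CSeq n, pathWeight L R x c := by
  have base (m : ℤ) (hm : m = 0 ∨ m = -1) : x m = ∑ᶠ c ∈ CSeq m, pathWeight L R x c := by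
    rcases hm with rfl | rfl
    · rw [CSeq.zero, finsum_mem_singleton, pathWeight_singleton]
    · rw [CSeq.neg_one, finsum_mem_singleton, pathWeight_singleton]
  have step (m : ℤ) (hm : 0 ≤ m) : m ≤ n →
      x (m - 1) = ∑ᶠ c ∈ CSeq (m - 1), pathWeight L R x c ∧
        x m = ∑ᶠ c ∈ CSeq m, pathWeight L R x c := by
    induction m, hm using Int.leInduction with
    | base => exact fun _ => ⟨base _ (by norm_num), base _ (by norm_num)⟩
    | succ m hm ih =>
      intro hle
      obtain ⟨hprev, hcur⟩ := ih (by omega)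
      refine ⟨by rwa [add_sub_cancel_right], ?_⟩
      rw [hrec _ (by omega) hle, finsum_pathWeight_eq L R x (by omega), add_sub_cancel_right,
        show m + 1 - 2 = m - 1 by ring, hcur, hprev]
  obtain rfl | hn := hn.eq_or_lt
  · exact base _ (by norm_num)
  · exact (step n (by omega) le_rfl).2

end PathWeight

theorem stmt12_general (n : ℤ) (hn : 1 ≤ n) (b : ℤ → ℤ)
    (a z : RatFunc2) (x : ℤ → RatFunc2)
    (hrec : ∀ m : ℤ, 1 ≤ m → m ≤ n →
      x m = z * ((1 - a ^ ((((-1 : ℤˣ) ^ (m - 1) : ℤˣ) : ℤ) * b m)) / (a - a⁻¹)) * x (m - 1)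
          + a ^ ((((-1 : ℤˣ) ^ (m - 1) : ℤˣ) : ℤ) * b m) * x (m - 2)) :
    x n = ∑ᶠ c ∈ CSeq n,
      z ^ kOf c * x (c.getLastD 0) *
        ((lSteps c).map (fun p =>
          (1 - a ^ ((((-1 : ℤˣ) ^ (p.1 - 1) : ℤˣ) : ℤ) * b p.1)) / (a - a⁻¹))).prod *
        ((rSteps c).map (fun p =>
          a ^ ((((-1 : ℤˣ) ^ (p.1 - 1) : ℤˣ) : ℤ) * b p.1))).prod := by
  rw [eq_finsum_pathWeight_of_rec _ _ x (by omega) hrec]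
  refine finsum_mem_congr rfl fun c _ => ?_
  simp only [pathWeight, List.prod_map_mul, List.map_const', List.prod_replicate, kOf]
  ring

/-- The closed formula (the paper's main theorem) for the solution `xₙ` of the
skein recursion `x_m = z·((1 − a^{ε_m b_m})/(a − a⁻¹))·x_{m−1} + a^{ε_m b_m}·x_{m−2}`,
`ε_m = (−1)^{m−1}`, with `x₀ = 1`, `x₋₁ = z⁻¹(a − a⁻¹)`, in the field `ℚ(a, z)`:
`xₙ = Σ_{c ∈ C} z^{k(c)} · x_{c_l} · Π_{i ∈ 𝓁(c)} (1 − a^{(−1)^{cᵢ−1} b_{cᵢ}})/(a − a⁻¹)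
      · Π_{i ∈ 𝓇(c)} a^{(−1)^{cᵢ−1} b_{cᵢ}}`. -/
theorem stmt12 (n : ℤ) (hn : 1 ≤ n) (b : ℤ → ℤ)
    (hb : ∀ i : ℤ, 1 ≤ i → i ≤ n → b i ≠ 0 ∧ Even (b i))
    (a z : RatFunc2)
    (ha : a = algebraMap (MvPolynomial (Fin 2) ℚ) RatFunc2 (MvPolynomial.X 0))
    (hz : z = algebraMap (MvPolynomial (Fin 2) ℚ) RatFunc2 (MvPolynomial.X 1))
    (x : ℤ → RatFunc2) (hx0 : x 0 = 1) (hxneg : x (-1) = z⁻¹ * (a - a⁻¹))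
    (hrec : ∀ m : ℤ, 1 ≤ m → m ≤ n →
      x m = z * ((1 - a ^ ((((-1 : ℤˣ) ^ (m - 1) : ℤˣ) : ℤ) * b m)) / (a - a⁻¹)) * x (m - 1)
          + a ^ ((((-1 : ℤˣ) ^ (m - 1) : ℤˣ) : ℤ) * b m) * x (m - 2)) :
    x n = ∑ᶠ c ∈ CSeq n,
      z ^ kOf c * x (c.getLastD 0) *
        ((lSteps c).map (fun p =>
          (1 - a ^ ((((-1 : ℤˣ) ^ (p.1 - 1) : ℤˣ) : ℤ) * b p.1)) / (a - a⁻¹))).prod *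
        ((rSteps c).map (fun p =>
          a ^ ((((-1 : ℤˣ) ^ (p.1 - 1) : ℤˣ) : ℤ) * b p.1))).prod :=
  stmt12_general n hn b a z x hrec
end

section
/- Let n ≥ 1 and let b_1, …, b_n be nonzero even integers. In the field ℚ(a, z) of rational functions in two variables over ℚ, define x_{−1} = z^{−1}·(a − a^{−1}), x_0 = 1, and for 1 ≤ m ≤ n define x_m = z·((1 − a^{ε_m b_m})/(a − a^{−1}))·x_{m−1} + a^{ε_m b_m}·x_{m−2}, where ε_m = (−1)^{m−1}. For an integer k with n − k even and 0 ≤ (n − k)/2, define ρ_k = Σ_C Π_{m ∈ C} a^{(−1)^{m+1} b_m} · Π_{m ∈ {1,…,n} \ (C ∪ (C−1))} (1 − a^{(−1)^{m+1} b_m}), where the sum is over all subsets C ⊆ {1, …, n} with C ∩ (C − 1) = ∅ and |C| = (n − k)/2, and C − 1 = {c − 1 : c ∈ C}. Then: if n is even, x_n = Σ_{k even, 0 ≤ k ≤ n} z^k·(a − a^{−1})^{−k}·ρ_k; and if n is odd, x_n = Σ_{k odd, −1 ≤ k ≤ n} z^k·(a − a^{−1})^{−k}·ρ_k. -/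
/-- `ρ_k(α) = Σ_C Π_{m ∈ C} a^{(−1)^{m+1} b_m} ·
Π_{m ∈ {1,…,n} ∖ (C ∪ (C−1))} (1 − a^{(−1)^{m+1} b_m})`, the sum over all
subsets `C ⊆ {1, …, n}` with `C ∩ (C−1) = ∅` and `|C| = (n − k)/2`. -/
noncomputable def rho (n : ℕ) (b : ℕ → ℤ) (a : RatFunc2) (k : ℤ) : RatFunc2 :=
  ∑ s ∈ (Finset.Icc 1 n).powerset.filter
      (fun s => s ∩ s.image (· - 1) = ∅ ∧ (2 * s.card : ℤ) = (n : ℤ) - k),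
    (∏ m ∈ s, a ^ ((-1 : ℤ) ^ (m + 1) * b m)) *
      ∏ m ∈ Finset.Icc 1 n \ (s ∪ s.image (· - 1)), (1 - a ^ ((-1 : ℤ) ^ (m + 1) * b m))

open Finset

section Dimers

variable {R : Type*} [CommRing R] (w : ℕ → R)

-- At `c = 1` the truncated `c - 1` is `0`: the dimer `{0, 1}` reaches the extra vertex `0`.
def dimerSets (n : ℕ) (k : ℤ) : Finset (Finset ℕ) :=
  (Icc 1 n).powerset.filter
    (fun s => s ∩ s.image (· - 1) = ∅ ∧ (2 * s.card : ℤ) = (n : ℤ) - k)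

def dimerWeight (n : ℕ) (s : Finset ℕ) : R :=
  (∏ m ∈ s, w m) * ∏ m ∈ Icc 1 n \ (s ∪ s.image (· - 1)), (1 - w m)

def dimerSum (n : ℕ) (k : ℤ) : R :=
  ∑ s ∈ dimerSets n k, dimerWeight w n s

lemma inter_image_pred_eq_empty_iff {s : Finset ℕ} (hs : 0 ∉ s) :
    s ∩ s.image (· - 1) = ∅ ↔ ∀ c ∈ s, c + 1 ∉ s := by
  simp only [eq_empty_iff_forall_notMem, mem_inter, mem_image, not_and, not_exists]
  constructor
  · intro h c hc hc1
    exact h c hc _ hc1 (Nat.add_sub_cancel c 1)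
  · intro h c hc d hd hdc
    obtain rfl : d = c + 1 := by
      have : d ≠ 0 := fun h0 => hs (h0 ▸ hd)
      omega
    exact h c hc hd

lemma mem_dimerSets {n : ℕ} {k : ℤ} {s : Finset ℕ} :
    s ∈ dimerSets n k ↔
      s ⊆ Icc 1 n ∧ (∀ c ∈ s, c + 1 ∉ s) ∧ (2 * s.card : ℤ) = n - k := by
  rw [dimerSets, mem_filter, mem_powerset]
  exact and_congr_right fun hs =>
    and_congr_left' (inter_image_pred_eq_empty_iff fun h => by simpa using hs h)

lemma two_mul_card_le_of_mem_dimerSets {n : ℕ} {k : ℤ} {s : Finset ℕ}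
    (h : s ∈ dimerSets n k) : 2 * s.card ≤ n + 1 := by
  obtain ⟨hs, hgap, -⟩ := mem_dimerSets.1 h
  have hdisj : Disjoint s (s.map (addRightEmbedding 1)) := by
    refine disjoint_left.2 fun c hc hc' => ?_
    obtain ⟨d, hd, rfl⟩ := mem_map.1 hc'
    exact hgap d hd hc
  have hcover : s ∪ s.map (addRightEmbedding 1) ⊆ Icc 1 (n + 1) := by
    intro c hc
    rcases mem_union.1 hc with hc | hc
    · exact Icc_subset_Icc_right (Nat.le_succ n) (hs hc)
    · obtain ⟨d, hd, rfl⟩ := mem_map.1 hc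
      have := mem_Icc.1 (hs hd)
      simp only [addRightEmbedding_apply, mem_Icc]
      omega
  have := card_le_card hcover
  rw [card_union_of_disjoint hdisj, card_map, Nat.card_Icc] at this
  omega

lemma dimerSum_eq_zero_of_not_even {n : ℕ} {k : ℤ} (h : ¬ Even ((n : ℤ) - k)) :
    dimerSum w n k = 0 :=
  sum_eq_zero fun s hs => absurd ⟨s.card, by have := (mem_dimerSets.1 hs).2.2; omega⟩ h

lemma dimerSum_eq_zero_of_lt {n : ℕ} {k : ℤ} (h : (n : ℤ) < k) : dimerSum w n k = 0 :=
  sum_eq_zero fun s hs => by have := (mem_dimerSets.1 hs).2.2; omega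

lemma dimerSum_eq_zero_of_lt_neg_one {n : ℕ} {k : ℤ} (h : k < -1) : dimerSum w n k = 0 :=
  sum_eq_zero fun s hs => by
    have := two_mul_card_le_of_mem_dimerSets hs
    have := (mem_dimerSets.1 hs).2.2
    omega

lemma filter_notMem_dimerSets (m : ℕ) (k : ℤ) :
    (dimerSets (m + 2) k).filter (m + 2 ∉ ·) = dimerSets (m + 1) (k - 1) := by
  ext s
  simp only [mem_filter, mem_dimerSets, subset_iff, mem_Icc]
  push_cast
  grind

lemma filter_mem_dimerSets (m : ℕ) (k : ℤ) :
    (dimerSets (m + 2) k).filter (m + 2 ∈ ·) = (dimerSets m k).image (insert (m + 2)) := by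
  ext s
  simp only [mem_filter, mem_image, mem_dimerSets]
  constructor
  · rintro ⟨⟨hs, hgap, hcard⟩, hm⟩
    refine ⟨s.erase (m + 2), ⟨fun c hc => ?_, fun c hc => ?_, ?_⟩, insert_erase hm⟩
    · have := mem_Icc.1 (hs (mem_of_mem_erase hc))
      have : c ≠ m + 1 := by rintro rfl; exact hgap _ (mem_of_mem_erase hc) hm
      have : c ≠ m + 2 := ne_of_mem_erase hc
      simp only [mem_Icc]
      omega
    · exact fun h => hgap c (mem_of_mem_erase hc) (mem_of_mem_erase h)
    · rw [card_erase_of_mem hm, Nat.cast_sub (card_pos.2 ⟨_, hm⟩)]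
      push_cast at hcard ⊢
      omega
  · rintro ⟨t, ⟨ht, hgap, hcard⟩, rfl⟩
    have hc : ∀ c ∈ t, 1 ≤ c ∧ c ≤ m := fun c hc => mem_Icc.1 (ht hc)
    have hm : m + 2 ∉ t := fun h => by have := hc _ h; omega
    refine ⟨⟨?_, ?_, ?_⟩, mem_insert_self _ _⟩
    · exact insert_subset (by simp) (ht.trans (Icc_subset_Icc_right (by omega)))
    · simp only [mem_insert]
      grind
    · rw [card_insert_of_notMem hm]
      push_cast at hcard ⊢
      omega

lemma sdiff_union_image_pred_of_subset {m : ℕ} {s : Finset ℕ} (hs : s ⊆ Icc 1 (m + 1)) :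
    Icc 1 (m + 2) \ (s ∪ s.image (· - 1))
      = insert (m + 2) (Icc 1 (m + 1) \ (s ∪ s.image (· - 1))) := by
  have hc : ∀ c ∈ s, 1 ≤ c ∧ c ≤ m + 1 := fun c hc => mem_Icc.1 (hs hc)
  ext y
  simp only [mem_sdiff, mem_insert, mem_union, mem_image, mem_Icc]
  grind

lemma sdiff_union_image_pred_insert {m : ℕ} {t : Finset ℕ} (ht : t ⊆ Icc 1 m) :
    Icc 1 (m + 2) \ (insert (m + 2) t ∪ (insert (m + 2) t).image (· - 1))
      = Icc 1 m \ (t ∪ t.image (· - 1)) := by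
  have hc : ∀ c ∈ t, 1 ≤ c ∧ c ≤ m := fun c hc => mem_Icc.1 (ht hc)
  ext y
  simp only [mem_sdiff, mem_insert, mem_union, mem_image, mem_Icc, image_insert]
  grind

lemma dimerWeight_of_subset {m : ℕ} {s : Finset ℕ} (hs : s ⊆ Icc 1 (m + 1)) :
    dimerWeight w (m + 2) s = (1 - w (m + 2)) * dimerWeight w (m + 1) s := by
  rw [dimerWeight, dimerWeight, sdiff_union_image_pred_of_subset hs,
    prod_insert (by simp), mul_left_comm]

lemma dimerWeight_insert {m : ℕ} {t : Finset ℕ} (ht : t ⊆ Icc 1 m) :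
    dimerWeight w (m + 2) (insert (m + 2) t) = w (m + 2) * dimerWeight w m t := by
  rw [dimerWeight, dimerWeight, sdiff_union_image_pred_insert ht,
    prod_insert fun h => by simpa using ht h, mul_assoc]

lemma dimerSum_add_two (m : ℕ) (k : ℤ) :
    dimerSum w (m + 2) k
      = (1 - w (m + 2)) * dimerSum w (m + 1) (k - 1) + w (m + 2) * dimerSum w m k := by
  have hm : ∀ t ∈ dimerSets m k, m + 2 ∉ t := fun t ht hm => by
    have := mem_Icc.1 ((mem_dimerSets.1 ht).1 hm); omega
  have hinj : Set.InjOn (insert (m + 2)) (dimerSets m k : Set (Finset ℕ)) :=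
    fun t ht t' ht' h => by rw [← erase_insert (hm t ht), h, erase_insert (hm t' ht')]
  rw [dimerSum, ← sum_filter_not_add_sum_filter _ (m + 2 ∈ ·), filter_notMem_dimerSets,
    filter_mem_dimerSets, sum_image hinj, dimerSum, dimerSum, mul_sum, mul_sum]
  congr 1
  · exact sum_congr rfl fun s hs => dimerWeight_of_subset w (mem_dimerSets.1 hs).1
  · exact sum_congr rfl fun t ht => dimerWeight_insert w (mem_dimerSets.1 ht).1

lemma dimerSum_zero_zero : dimerSum w 0 0 = 1 := by
  have : dimerSets 0 0 = {∅} := by decide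
  simp [dimerSum, this, dimerWeight]

lemma dimerSum_one_neg_one : dimerSum w 1 (-1) = w 1 := by
  have hsets : dimerSets 1 (-1) = {{1}} := by decide
  have hcompl : ({1} : Finset ℕ) \ {1, 0} = ∅ := by decide
  simp [dimerSum, hsets, dimerWeight, hcompl]

lemma dimerSum_one_one : dimerSum w 1 1 = 1 - w 1 := by
  have : dimerSets 1 1 = {∅} := by decide
  simp [dimerSum, this, dimerWeight]

end Dimers

section DimerPoly

variable {K : Type*} [Field K] (w : ℕ → K) (t : K)

noncomputable def dimerPoly (n : ℕ) : K :=
  ∑ k ∈ Icc (-1 : ℤ) n, t ^ k * dimerSum w n k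

lemma dimerPoly_eq_sum_Icc {n : ℕ} {lo hi : ℤ} (hlo : lo ≤ -1) (hhi : n ≤ hi) :
    dimerPoly w t n = ∑ k ∈ Icc lo hi, t ^ k * dimerSum w n k := by
  refine sum_subset (Icc_subset_Icc hlo hhi) fun k hk hk' => ?_
  rw [mem_Icc] at hk hk'
  rcases lt_or_gt_of_ne (show k ≠ -1 by omega) with h | h
  · rw [dimerSum_eq_zero_of_lt_neg_one w h, mul_zero]
  · rw [dimerSum_eq_zero_of_lt w (by omega), mul_zero]

lemma dimerPoly_eq_sum_filter {n : ℕ} (p : ℤ → Prop) [DecidablePred p]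
    (hp : ∀ k, Even ((n : ℤ) - k) → p k) :
    dimerPoly w t n = ∑ k ∈ (Icc (-1 : ℤ) n).filter p, t ^ k * dimerSum w n k :=
  (sum_filter_of_ne fun k _ hk => hp k <| by_contra fun h => hk <| by
    rw [dimerSum_eq_zero_of_not_even w h, mul_zero]).symm

lemma dimerPoly_zero : dimerPoly w t 0 = 1 := by
  rw [dimerPoly, Nat.cast_zero, show Icc (-1 : ℤ) 0 = {-1, 0} by rfl, sum_pair (by norm_num),
    dimerSum_eq_zero_of_not_even w (by decide), dimerSum_zero_zero]
  simp

lemma dimerPoly_one : dimerPoly w t 1 = t * (1 - w 1) + w 1 * t⁻¹ := by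
  rw [dimerPoly, Nat.cast_one, show Icc (-1 : ℤ) 1 = {-1, 0, 1} by rfl,
    sum_insert (by decide), sum_pair (by norm_num), dimerSum_one_neg_one, dimerSum_one_one,
    dimerSum_eq_zero_of_not_even w (by decide)]
  simp only [zpow_neg, zpow_one, zpow_zero]
  ring

lemma dimerPoly_add_two (ht : t ≠ 0) (m : ℕ) :
    dimerPoly w t (m + 2)
      = t * (1 - w (m + 2)) * dimerPoly w t (m + 1) + w (m + 2) * dimerPoly w t m := by
  have hshift : dimerPoly w t (m + 1)
      = ∑ k ∈ Icc (-1 : ℤ) (m + 2), t ^ (k - 1) * dimerSum w (m + 1) (k - 1) := by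
    rw [dimerPoly_eq_sum_Icc w t (by norm_num : (-2 : ℤ) ≤ -1) (le_refl _),
      show Icc (-1 : ℤ) (m + 2) = (Icc (-2 : ℤ) (m + 1)).map (addRightEmbedding 1) by
        rw [map_add_right_Icc]; norm_num [add_assoc],
      sum_map]
    simp only [addRightEmbedding_apply, add_sub_cancel_right, Nat.cast_add, Nat.cast_one]
  calc dimerPoly w t (m + 2)
      = ∑ k ∈ Icc (-1 : ℤ) (m + 2),
          (t * (1 - w (m + 2)) * (t ^ (k - 1) * dimerSum w (m + 1) (k - 1))
            + w (m + 2) * (t ^ k * dimerSum w m k)) := by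
        refine sum_congr (by push_cast; rfl) fun k _ => ?_
        rw [dimerSum_add_two, zpow_sub_one₀ ht]
        field_simp
    _ = _ := by
        rw [sum_add_distrib, ← mul_sum, ← mul_sum, hshift,
          dimerPoly_eq_sum_Icc w t (le_refl (-1 : ℤ)) (by omega : (m : ℤ) ≤ m + 2)]

theorem eq_dimerPoly_of_recurrence (ht : t ≠ 0) (x : ℤ → K) (n : ℕ) (hx0 : x 0 = 1)
    (hxneg : x (-1) = t⁻¹)
    (hrec : ∀ m : ℕ, 1 ≤ m → m ≤ n →
      x m = t * (1 - w m) * x ((m : ℤ) - 1) + w m * x ((m : ℤ) - 2)) :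
    x n = dimerPoly w t n := by
  suffices ∀ m, m ≤ n → x m = dimerPoly w t m from this n le_rfl
  refine Nat.twoStepInduction ?_ ?_ fun m ih ih' hm => ?_
  · exact fun _ => by rw [Nat.cast_zero, hx0, dimerPoly_zero]
  · intro h1
    rw [hrec 1 le_rfl h1, dimerPoly_one]
    norm_num [hx0, hxneg]
  · rw [hrec (m + 2) (by omega) hm, dimerPoly_add_two w t ht,
      show ((m + 2 : ℕ) : ℤ) - 1 = (m + 1 : ℕ) by push_cast; ring,
      show ((m + 2 : ℕ) : ℤ) - 2 = m by push_cast; ring, ih (by omega), ih' (by omega)]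

end DimerPoly

lemma rho_eq_dimerSum (n : ℕ) (b : ℕ → ℤ) (a : RatFunc2) (k : ℤ) :
    rho n b a k = dimerSum (fun m => a ^ ((-1 : ℤ) ^ (m + 1) * b m)) n k :=
  rfl

lemma algebraMap_X_ne_zero (i : Fin 2) :
    algebraMap (MvPolynomial (Fin 2) ℚ) RatFunc2 (MvPolynomial.X i) ≠ 0 :=
  (map_ne_zero_iff _ (IsFractionRing.injective _ _)).2 (MvPolynomial.X_ne_zero i)

lemma algebraMap_X_sub_inv_ne_zero (i : Fin 2) :
    algebraMap (MvPolynomial (Fin 2) ℚ) RatFunc2 (MvPolynomial.X i)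
      - (algebraMap (MvPolynomial (Fin 2) ℚ) RatFunc2 (MvPolynomial.X i))⁻¹ ≠ 0 := by
  intro h
  have hsq : algebraMap (MvPolynomial (Fin 2) ℚ) RatFunc2 (MvPolynomial.X i * MvPolynomial.X i)
      = algebraMap _ _ 1 := by
    rw [map_mul, map_one]
    field_simp [algebraMap_X_ne_zero i] at h
    linear_combination h
  have := congrArg (MvPolynomial.eval fun _ => (0 : ℚ)) (IsFractionRing.injective _ _ hsq)
  simp only [map_mul, map_one, MvPolynomial.eval_X] at this
  norm_num at this

theorem stmt13_general (n : ℕ) (b : ℕ → ℤ)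
    (a z : RatFunc2)
    (ha : a = algebraMap (MvPolynomial (Fin 2) ℚ) RatFunc2 (MvPolynomial.X 0))
    (hz : z = algebraMap (MvPolynomial (Fin 2) ℚ) RatFunc2 (MvPolynomial.X 1))
    (x : ℤ → RatFunc2) (hx0 : x 0 = 1) (hxneg : x (-1) = z⁻¹ * (a - a⁻¹))
    (hrec : ∀ m : ℕ, 1 ≤ m → m ≤ n →
      x m = z * ((1 - a ^ ((-1 : ℤ) ^ (m - 1) * b m)) / (a - a⁻¹)) * x ((m : ℤ) - 1)
          + a ^ ((-1 : ℤ) ^ (m - 1) * b m) * x ((m : ℤ) - 2)) :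
    (Even n → x n = ∑ k ∈ (Finset.Icc (0 : ℤ) n).filter (fun k => Even k),
        z ^ k * (a - a⁻¹) ^ (-k) * rho n b a k) ∧
    (Odd n → x n = ∑ k ∈ (Finset.Icc (-1 : ℤ) n).filter (fun k => Odd k),
        z ^ k * (a - a⁻¹) ^ (-k) * rho n b a k) := by
  set w : ℕ → RatFunc2 := fun m => a ^ ((-1 : ℤ) ^ (m + 1) * b m)
  have hz0 : z ≠ 0 := hz ▸ algebraMap_X_ne_zero 1
  have hd : a - a⁻¹ ≠ 0 := ha ▸ algebraMap_X_sub_inv_ne_zero 0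
  have hterm : ∀ k,
      z ^ k * (a - a⁻¹) ^ (-k) * rho n b a k = (z / (a - a⁻¹)) ^ k * dimerSum w n k :=
    fun k => by rw [div_zpow, zpow_neg, div_eq_mul_inv, rho_eq_dimerSum]
  have hxn : x n = dimerPoly w (z / (a - a⁻¹)) n := by
    refine eq_dimerPoly_of_recurrence w _ (div_ne_zero hz0 hd) x n hx0
      (by rw [hxneg, inv_div, div_eq_inv_mul]) fun m hm hmn => ?_
    rw [hrec m hm hmn, show (-1 : ℤ) ^ (m - 1) = (-1) ^ (m + 1) by
      rw [show m + 1 = m - 1 + 2 by omega, pow_add, neg_one_sq, mul_one]]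
    ring
  simp only [hterm, hxn]
  refine ⟨fun hn => ?_, fun hn => ?_⟩
  · rw [dimerPoly_eq_sum_filter w _ Even fun k hk => by simpa [Int.even_sub, hn] using hk]
    congr 1
    ext k
    simp only [mem_filter, mem_Icc, Int.even_iff]
    omega
  · exact dimerPoly_eq_sum_filter w _ Odd fun k hk => by
      simpa [Int.even_sub, ← Int.not_even_iff_odd, Nat.not_even_iff_odd.2 hn] using hk

/-- The paper's Theorem 2 (collected form): for the solution `xₙ` of the skein
recursion `x_m = z·((1 − a^{ε_m b_m})/(a − a⁻¹))·x_{m−1} + a^{ε_m b_m}·x_{m−2}`,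
`ε_m = (−1)^{m−1}`, with `x₀ = 1`, `x₋₁ = z⁻¹(a − a⁻¹)`, in the field `ℚ(a,z)`:
if `n` is even then `xₙ = Σ_{k even, 0 ≤ k ≤ n} z^k (a − a⁻¹)^{−k} ρ_k`, and
if `n` is odd then `xₙ = Σ_{k odd, −1 ≤ k ≤ n} z^k (a − a⁻¹)^{−k} ρ_k`. -/
theorem stmt13 (n : ℕ) (hn : 1 ≤ n) (b : ℕ → ℤ)
    (hb : ∀ i : ℕ, 1 ≤ i → i ≤ n → b i ≠ 0 ∧ Even (b i))
    (a z : RatFunc2)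
    (ha : a = algebraMap (MvPolynomial (Fin 2) ℚ) RatFunc2 (MvPolynomial.X 0))
    (hz : z = algebraMap (MvPolynomial (Fin 2) ℚ) RatFunc2 (MvPolynomial.X 1))
    (x : ℤ → RatFunc2) (hx0 : x 0 = 1) (hxneg : x (-1) = z⁻¹ * (a - a⁻¹))
    (hrec : ∀ m : ℕ, 1 ≤ m → m ≤ n →
      x m = z * ((1 - a ^ ((-1 : ℤ) ^ (m - 1) * b m)) / (a - a⁻¹)) * x ((m : ℤ) - 1)
          + a ^ ((-1 : ℤ) ^ (m - 1) * b m) * x ((m : ℤ) - 2)) :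
    (Even n → x n = ∑ k ∈ (Finset.Icc (0 : ℤ) n).filter (fun k => Even k),
        z ^ k * (a - a⁻¹) ^ (-k) * rho n b a k) ∧
    (Odd n → x n = ∑ k ∈ (Finset.Icc (-1 : ℤ) n).filter (fun k => Odd k),
        z ^ k * (a - a⁻¹) ^ (-k) * rho n b a k) :=
  stmt13_general n b a z ha hz x hx0 hxneg hrec
end
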